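/- arXiv:2005.12605 — 4 statements merged into one kernel-verified Lean document; each statement's English description precedes it below -/
import Mathlib

section
/- Let X be a Fréchet space with seminorms ‖·‖ₙ and let s ∈ ℝ₊^∞ with supp s := {n : sₙ > 0} nonempty. Define X_s := ⋃_{t≥0} t·Π_s(X) and ‖x‖_s := sup{‖x‖ₙ/sₙ : n ∈ supp s} for x ∈ X_s. Then ‖·‖_s is a norm on X_s, the set Π_s(X) is the closed unit ball of this norm, and (X_s, ‖·‖_s) is a Banach space. -/
open Filter Topology Set

theorem stmt3 {X : Type*} [AddCommGroup X] [Module ℝ X] [MetricSpace X] [CompleteSpace X]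
    (p : ℕ → Seminorm ℝ X)
    (hdist : ∀ x y : X,
      dist x y = ⨆ n : ℕ, (2:ℝ)⁻¹ ^ n * p n (x - y) / (1 + p n (x - y)))
    (s : ℕ → ℝ) (hs : ∀ n, 0 ≤ s n) (hsupp : ∃ n, 0 < s n)
    (Xs : Set X) (hXs : Xs = {x : X | ∃ t : ℝ, 0 ≤ t ∧ ∀ n, p n x ≤ t * s n})
    (N : X → ℝ) (hN : ∀ x : X, N x = ⨆ n : {n : ℕ // 0 < s n}, p n x / s n) :
    -- X_s is a linear subspace
    ((0:X) ∈ Xs) ∧ (∀ x ∈ Xs, ∀ y ∈ Xs, x + y ∈ Xs) ∧ (∀ c : ℝ, ∀ x ∈ Xs, c • x ∈ Xs) ∧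
    -- ‖·‖_s is a norm on X_s
    (∀ x ∈ Xs, N x = 0 → x = 0) ∧
    (∀ c : ℝ, ∀ x ∈ Xs, N (c • x) = |c| * N x) ∧
    (∀ x ∈ Xs, ∀ y ∈ Xs, N (x + y) ≤ N x + N y) ∧
    -- Π_s(X) is the closed unit ball of the norm ‖·‖_s
    (∀ x : X, (∀ n, p n x ≤ s n) ↔ (x ∈ Xs ∧ N x ≤ 1)) ∧
    -- (X_s, ‖·‖_s) is a Banach space (complete in the norm)
    (∀ u : ℕ → X, (∀ k, u k ∈ Xs) →
      (∀ ε : ℝ, 0 < ε → ∃ K : ℕ, ∀ j ≥ K, ∀ k ≥ K, N (u j - u k) < ε) →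
      ∃ x ∈ Xs, Filter.Tendsto (fun k => N (u k - x)) Filter.atTop (𝓝 0)) := by
  subst hXs
  obtain ⟨n₀, hn₀⟩ := hsupp
  haveI inst : Nonempty {n : ℕ // 0 < s n} := ⟨⟨n₀, hn₀⟩⟩
  -- subspace properties
  have hzero : (0:X) ∈ {x : X | ∃ t : ℝ, 0 ≤ t ∧ ∀ n, p n x ≤ t * s n} :=
    ⟨0, le_refl 0, fun n => by simp⟩
  have haddm : ∀ x ∈ {x : X | ∃ t : ℝ, 0 ≤ t ∧ ∀ n, p n x ≤ t * s n},
      ∀ y ∈ {x : X | ∃ t : ℝ, 0 ≤ t ∧ ∀ n, p n x ≤ t * s n},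
      x + y ∈ {x : X | ∃ t : ℝ, 0 ≤ t ∧ ∀ n, p n x ≤ t * s n} := by
    rintro x ⟨t1, ht1, h1⟩ y ⟨t2, ht2, h2⟩
    refine ⟨t1 + t2, by linarith, fun n => ?_⟩
    have := map_add_le_add (p n) x y
    have h1n := h1 n; have h2n := h2 n
    rw [add_mul]; linarith
  have hsmulm : ∀ (c : ℝ), ∀ x ∈ {x : X | ∃ t : ℝ, 0 ≤ t ∧ ∀ n, p n x ≤ t * s n},
      c • x ∈ {x : X | ∃ t : ℝ, 0 ≤ t ∧ ∀ n, p n x ≤ t * s n} := by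
    rintro c x ⟨t, ht, h⟩
    refine ⟨|c| * t, by positivity, fun n => ?_⟩
    rw [map_smul_eq_mul, Real.norm_eq_abs, mul_assoc]
    exact mul_le_mul_of_nonneg_left (h n) (abs_nonneg c)
  have hsubm : ∀ x ∈ {x : X | ∃ t : ℝ, 0 ≤ t ∧ ∀ n, p n x ≤ t * s n},
      ∀ y ∈ {x : X | ∃ t : ℝ, 0 ≤ t ∧ ∀ n, p n x ≤ t * s n},
      x - y ∈ {x : X | ∃ t : ℝ, 0 ≤ t ∧ ∀ n, p n x ≤ t * s n} := by
    intro x hx y hy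
    have := haddm x hx ((-1 : ℝ) • y) (hsmulm (-1) y hy)
    simpa [sub_eq_add_neg] using this
  -- boundedness of the sup family
  have hbdd : ∀ x ∈ {x : X | ∃ t : ℝ, 0 ≤ t ∧ ∀ n, p n x ≤ t * s n},
      BddAbove (Set.range fun n : {n : ℕ // 0 < s n} => p n x / s n) := by
    rintro x ⟨t, ht, h⟩
    refine ⟨t, ?_⟩
    rintro _ ⟨n, rfl⟩
    exact (div_le_iff₀ n.2).2 (h n)
  have hleN : ∀ x ∈ {x : X | ∃ t : ℝ, 0 ≤ t ∧ ∀ n, p n x ≤ t * s n},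
      ∀ n : {n : ℕ // 0 < s n}, p n x / s n ≤ N x := by
    intro x hx n
    rw [hN]
    exact le_ciSup (hbdd x hx) n
  have hp0 : ∀ x ∈ {x : X | ∃ t : ℝ, 0 ≤ t ∧ ∀ n, p n x ≤ t * s n},
      ∀ n, s n = 0 → p n x = 0 := by
    rintro x ⟨t, ht, h⟩ n hn
    have := h n
    rw [hn, mul_zero] at this
    exact le_antisymm this (apply_nonneg _ _)
  have hple : ∀ x ∈ {x : X | ∃ t : ℝ, 0 ≤ t ∧ ∀ n, p n x ≤ t * s n},
      ∀ n, p n x ≤ N x * s n := by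
    intro x hx n
    by_cases h : 0 < s n
    · exact (div_le_iff₀ h).1 (hleN x hx ⟨n, h⟩)
    · have hsn : s n = 0 := le_antisymm (not_lt.1 h) (hs n)
      rw [hsn, mul_zero, hp0 x hx n hsn]
  have hNn : ∀ x : X, 0 ≤ N x := by
    intro x
    rw [hN]
    exact Real.iSup_nonneg fun n => div_nonneg (apply_nonneg _ _) (hs n)
  have hNle : ∀ (x : X) (c : ℝ), (∀ n : {n : ℕ // 0 < s n}, p n x / s n ≤ c) → N x ≤ c := by
    intro x c h
    rw [hN]
    exact ciSup_le h
  refine ⟨hzero, haddm, hsmulm, ?_, ?_, ?_, ?_, ?_⟩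
  · -- N x = 0 → x = 0
    intro x hx hNx
    have hpn : ∀ n, p n x = 0 := by
      intro n
      have := hple x hx n
      rw [hNx, zero_mul] at this
      exact le_antisymm this (apply_nonneg _ _)
    have : dist x 0 = 0 := by
      rw [hdist x 0]
      have : ∀ n : ℕ, (2:ℝ)⁻¹ ^ n * p n (x - 0) / (1 + p n (x - 0)) = 0 := by
        intro n; rw [sub_zero, hpn n]; simp
      simp only [this, ciSup_const]
    exact dist_eq_zero.1 this
  · -- homogeneity
    intro c x _
    rw [hN, hN, Real.mul_iSup_of_nonneg (abs_nonneg c)]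
    congr 1
    ext n
    rw [map_smul_eq_mul, Real.norm_eq_abs, mul_div_assoc]
  · -- triangle inequality
    intro x hx y hy
    apply hNle
    intro n
    calc p n (x + y) / s n ≤ (p n x + p n y) / s n := by
          exact div_le_div_of_nonneg_right (map_add_le_add _ _ _) (hs _)
      _ = p n x / s n + p n y / s n := add_div _ _ _
      _ ≤ N x + N y := add_le_add (hleN x hx n) (hleN y hy n)
  · -- closed unit ball
    intro x
    constructor
    · intro h
      have hx : x ∈ {x : X | ∃ t : ℝ, 0 ≤ t ∧ ∀ n, p n x ≤ t * s n} :=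
        ⟨1, zero_le_one, fun n => by rw [one_mul]; exact h n⟩
      refine ⟨hx, hNle x 1 fun n => ?_⟩
      rw [div_le_one n.2]
      exact h n
    · rintro ⟨hx, hNx⟩ n
      by_cases h : 0 < s n
      · have := (div_le_iff₀ h).1 (hleN x hx ⟨n, h⟩)
        calc p n x ≤ N x * s n := this
          _ ≤ 1 * s n := mul_le_mul_of_nonneg_right hNx (hs n)
          _ = s n := one_mul _
      · have hsn : s n = 0 := le_antisymm (not_lt.1 h) (hs n)
        rw [hsn, hp0 x hx n hsn]
  · -- completeness
    intro u hu hcau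
    have hdm : ∀ j k, u j - u k ∈ {x : X | ∃ t : ℝ, 0 ≤ t ∧ ∀ n, p n x ≤ t * s n} :=
      fun j k => hsubm _ (hu j) _ (hu k)
    -- Cauchy in the metric
    have hcs : CauchySeq u := by
      rw [Metric.cauchySeq_iff]
      intro ε hε
      obtain ⟨M, hM⟩ : ∃ M : ℕ, (2⁻¹ : ℝ) ^ M < ε / 2 :=
        exists_pow_lt_of_lt_one (by linarith) (by norm_num)
      set C : ℝ := (∑ i ∈ Finset.range M, s i) + 1 with hC
      have hCpos : 0 < C := by
        have : 0 ≤ ∑ i ∈ Finset.range M, s i := Finset.sum_nonneg fun i _ => hs i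
        rw [hC]; linarith
      obtain ⟨K, hK⟩ := hcau (ε / 2 / C) (by positivity)
      refine ⟨K, fun j hj k hk => ?_⟩
      have hNd := hK j hj k hk
      have hNd0 : 0 ≤ N (u j - u k) := hNn _
      rw [hdist]
      have hsup : (⨆ n : ℕ, (2:ℝ)⁻¹ ^ n * p n (u j - u k) / (1 + p n (u j - u k))) ≤ ε / 2 := by
        apply ciSup_le
        intro n
        have hq0 : 0 ≤ p n (u j - u k) := apply_nonneg _ _
        have hden : (0:ℝ) < 1 + p n (u j - u k) := by linarith
        have hpow0 : (0:ℝ) ≤ (2⁻¹:ℝ) ^ n := by positivity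
        have hpow1 : ((2:ℝ)⁻¹) ^ n ≤ 1 :=
          pow_le_one₀ (by norm_num) (by norm_num)
        by_cases hn : n < M
        · have h1 : p n (u j - u k) ≤ N (u j - u k) * s n := hple _ (hdm j k) n
          have h2 : s n ≤ C := by
            have := Finset.single_le_sum (f := s) (fun i _ => hs i) (Finset.mem_range.2 hn)
            rw [hC]; linarith
          have h3 : N (u j - u k) * s n ≤ ε / 2 / C * C := by
            calc N (u j - u k) * s n ≤ ε / 2 / C * s n :=
                  mul_le_mul_of_nonneg_right hNd.le (hs n)
              _ ≤ ε / 2 / C * C := mul_le_mul_of_nonneg_left h2 (by positivity)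
          have h4 : ε / 2 / C * C = ε / 2 := div_mul_cancel₀ _ hCpos.ne'
          have hterm : (2:ℝ)⁻¹ ^ n * p n (u j - u k) / (1 + p n (u j - u k))
              ≤ p n (u j - u k) := by
            rw [div_le_iff₀ hden]
            nlinarith
          linarith
        · have hMn : ((2:ℝ)⁻¹) ^ n ≤ ((2:ℝ)⁻¹) ^ M :=
            pow_le_pow_of_le_one (by norm_num) (by norm_num) (not_lt.1 hn)
          have hterm : (2:ℝ)⁻¹ ^ n * p n (u j - u k) / (1 + p n (u j - u k))
              ≤ (2:ℝ)⁻¹ ^ n := by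
            rw [div_le_iff₀ hden]
            nlinarith
          linarith
      linarith
    obtain ⟨x, hx⟩ := cauchySeq_tendsto_of_complete hcs
    -- seminormwise convergence
    have hpt : ∀ n : ℕ, Tendsto (fun k => p n (u k - x)) atTop (𝓝 0) := by
      intro n
      rw [Metric.tendsto_atTop] at hx ⊢
      intro ε hε
      set a : ℝ := (2:ℝ)⁻¹ ^ n with ha
      have hapos : 0 < a := by rw [ha]; positivity
      set e : ℝ := ε / 2 with he
      have hepos : 0 < e := by rw [he]; linarith
      obtain ⟨K, hK⟩ := hx (a * e / (1 + e)) (by positivity)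
      refine ⟨K, fun k hk => ?_⟩
      have hd := hK k hk
      have hb : BddAbove (Set.range fun m : ℕ =>
          (2:ℝ)⁻¹ ^ m * p m (u k - x) / (1 + p m (u k - x))) := by
        refine ⟨1, ?_⟩
        rintro _ ⟨m, rfl⟩
        have hq0 : 0 ≤ p m (u k - x) := apply_nonneg _ _
        have hden : (0:ℝ) < 1 + p m (u k - x) := by linarith
        rw [div_le_one hden]
        have h1 : ((2:ℝ)⁻¹) ^ m ≤ 1 := pow_le_one₀ (by norm_num) (by norm_num)
        have h0 : (0:ℝ) ≤ (2⁻¹:ℝ) ^ m := by positivity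
        nlinarith
      have hterm : (2:ℝ)⁻¹ ^ n * p n (u k - x) / (1 + p n (u k - x)) ≤ dist (u k) x := by
        rw [hdist]
        exact le_ciSup hb n
      set q := p n (u k - x) with hq
      have hq0 : 0 ≤ q := apply_nonneg _ _
      have hqden : (0:ℝ) < 1 + q := by linarith
      have heden : (0:ℝ) < 1 + e := by linarith
      have hlt : a * q / (1 + q) < a * e / (1 + e) := lt_of_le_of_lt hterm hd
      rw [div_lt_div_iff₀ hqden heden] at hlt
      have hqe : q < e := by nlinarith
      rw [Real.dist_eq, sub_zero, abs_of_nonneg hq0]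
      rw [he] at hqe
      linarith
    -- epsilon-limit principle
    have key : ∀ (n : ℕ) (y : X) (c : ℝ) (K : ℕ),
        (∀ j ≥ K, p n y ≤ c + p n (u j - x)) → p n y ≤ c := by
      intro n y c K h
      by_contra hlt
      push_neg at hlt
      have ht := hpt n
      rw [Metric.tendsto_atTop] at ht
      obtain ⟨K', hK'⟩ := ht (p n y - c) (by linarith)
      have hj := h (max K K') (le_max_left _ _)
      have h2 := hK' (max K K') (le_max_right _ _)
      rw [Real.dist_eq, sub_zero, abs_of_nonneg (apply_nonneg _ _)] at h2
      linarith
    -- x is in Xs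
    obtain ⟨K₀, hK₀⟩ := hcau 1 one_pos
    obtain ⟨tK, htK, hbK⟩ := hu K₀
    have hxmem : x ∈ {x : X | ∃ t : ℝ, 0 ≤ t ∧ ∀ n, p n x ≤ t * s n} := by
      refine ⟨tK + 1, by linarith, fun n => ?_⟩
      apply key n x ((tK + 1) * s n) K₀
      intro j hj
      have h1 : p n x ≤ p n (u j) + p n (x - u j) := by
        have := map_add_le_add (p n) (u j) (x - u j)
        rwa [add_sub_cancel] at this
      have heq : p n (x - u j) = p n (u j - x) := by
        rw [← map_neg_eq_map (p n), neg_sub]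
      have h2 : p n (u j - u K₀) ≤ 1 * s n := by
        calc p n (u j - u K₀) ≤ N (u j - u K₀) * s n := hple _ (hdm j K₀) n
          _ ≤ 1 * s n := mul_le_mul_of_nonneg_right (hK₀ j hj K₀ (le_refl K₀)).le (hs n)
      have h3 : p n (u j) ≤ p n (u K₀) + p n (u j - u K₀) := by
        have := map_add_le_add (p n) (u K₀) (u j - u K₀)
        rwa [add_sub_cancel] at this
      have h4 := hbK n
      rw [heq] at h1
      have : (tK + 1) * s n = tK * s n + 1 * s n := by ring
      linarith
    refine ⟨x, hxmem, ?_⟩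
    rw [Metric.tendsto_atTop]
    intro ε hε
    obtain ⟨K, hK⟩ := hcau (ε / 2) (by linarith)
    refine ⟨K, fun k hk => ?_⟩
    have hkx : ∀ n, p n (u k - x) ≤ ε / 2 * s n := by
      intro n
      apply key n (u k - x) (ε / 2 * s n) K
      intro j hj
      have h1 : p n (u k - x) ≤ p n (u k - u j) + p n (u j - x) := by
        have := map_add_le_add (p n) (u k - u j) (u j - x)
        rwa [sub_add_sub_cancel] at this
      have h2 : p n (u k - u j) ≤ ε / 2 * s n := by
        calc p n (u k - u j) ≤ N (u k - u j) * s n := hple _ (hdm k j) n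
          _ ≤ ε / 2 * s n := mul_le_mul_of_nonneg_right (hK k hk j hj).le (hs n)
      linarith
    have hNbd : N (u k - x) ≤ ε / 2 := by
      apply hNle
      intro n
      exact (div_le_iff₀ n.2).2 (hkx n)
    rw [Real.dist_eq, sub_zero, abs_of_nonneg (hNn _)]
    linarith
end

section
/- (Long Orbit or Empty Value Principle.) Let (M, ρ) be a complete metric space and S : M ⇉ M a set-valued map satisfying: (i) x ∉ S(x) for all x ∈ M, and (ii) whenever y ∈ S(x) and xₙ → x, then y ∈ S(xₙ) for infinitely many n. Then for any x₀ ∈ M and K > 0, either (a) there exist x₁, …, x_{n+1} ∈ M with x_{i+1} ∈ S(xᵢ) for i = 0,…,n and ∑_{i=0}^{n} ρ(xᵢ, x_{i+1}) > K, or (b) there exists x̄ ∈ M with ρ(x₀, x̄) ≤ K and S(x̄) = ∅. -/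
open Filter Topology Set

private lemma greedy_choice {M : Type*} [MetricSpace M] (S : M → Set M)
    (h1 : ∀ x : M, x ∉ S x) (K : ℝ) (hK : 0 < K) (a : M) (hne : (S a).Nonempty) :
    ∃ y, y ∈ S a ∧ ∀ z ∈ S a, min (dist a z) K ≤ 2 * dist a y := by
  set T := (fun z => min (dist a z) K) '' S a with hT
  have hTne : T.Nonempty := hne.image _
  have hTbdd : BddAbove T := ⟨K, by rintro t ⟨z, hz, rfl⟩; exact min_le_right _ _⟩
  set s := sSup T with hs
  obtain ⟨z₀, hz₀⟩ := hne
  have h0 : 0 < min (dist a z₀) K := by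
    refine lt_min (dist_pos.2 ?_) hK
    rintro rfl; exact h1 a hz₀
  have hspos : 0 < s := lt_of_lt_of_le h0 (le_csSup hTbdd ⟨z₀, hz₀, rfl⟩)
  obtain ⟨t, ht, hts⟩ := exists_lt_of_lt_csSup hTne (by linarith : s / 2 < s)
  obtain ⟨y, hy, rfl⟩ := ht
  refine ⟨y, hy, fun z hz => ?_⟩
  have h1' : min (dist a z) K ≤ s := le_csSup hTbdd ⟨z, hz, rfl⟩
  have h2' : min (dist a y) K ≤ dist a y := min_le_left _ _
  linarith

theorem stmt6 {M : Type*} [MetricSpace M] [CompleteSpace M]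
    (S : M → Set M)
    (h1 : ∀ x : M, x ∉ S x)
    (h2 : ∀ x y : M, y ∈ S x → ∀ u : ℕ → M, Filter.Tendsto u Filter.atTop (𝓝 x) →
      {n : ℕ | y ∈ S (u n)}.Infinite)
    (x₀ : M) (K : ℝ) (hK : 0 < K) :
    (∃ (n : ℕ) (x : ℕ → M), x 0 = x₀ ∧ (∀ i ≤ n, x (i + 1) ∈ S (x i)) ∧
      K < ∑ i ∈ Finset.range (n + 1), dist (x i) (x (i + 1))) ∨
    (∃ xb : M, dist x₀ xb ≤ K ∧ S xb = ∅) := by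
  by_contra hcon
  push_neg at hcon
  obtain ⟨ha, hb⟩ := hcon
  -- key step: from a point within budget, a greedy next point exists
  have key : ∀ a : M, dist x₀ a ≤ K →
      ∃ y, y ∈ S a ∧ ∀ z ∈ S a, min (dist a z) K ≤ 2 * dist a y := by
    intro a haK
    exact greedy_choice S h1 K hK a (hb a haK)
  classical
  -- define the greedy sequence
  let x : ℕ → M := fun n => Nat.rec x₀
    (fun _ a => if h : ∃ y, y ∈ S a ∧ ∀ z ∈ S a, min (dist a z) K ≤ 2 * dist a y
      then h.choose else a) n
  have hx0 : x 0 = x₀ := rfl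
  have hxs : ∀ n, x (n + 1) =
      (if h : ∃ y, y ∈ S (x n) ∧ ∀ z ∈ S (x n), min (dist (x n) z) K ≤ 2 * dist (x n) y
        then h.choose else x n) := fun n => rfl
  have H : ∀ n, ∀ i < n, x (i + 1) ∈ S (x i) ∧
      ∀ z ∈ S (x i), min (dist (x i) z) K ≤ 2 * dist (x i) (x (i + 1)) := by
    intro n
    induction n with
    | zero => intro i hi; omega
    | succ m ih =>
      intro i hi
      rcases Nat.lt_succ_iff_lt_or_eq.1 hi with h | rfl
      · exact ih i h
      · have hdist : dist x₀ (x i) ≤ K := by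
          cases i with
          | zero => simpa [hx0] using hK.le
          | succ k =>
            have hchain : ∀ j ≤ k, x (j + 1) ∈ S (x j) :=
              fun j hjk => (ih j (Nat.lt_succ_of_le hjk)).1
            have hsum := ha k x rfl hchain
            calc dist x₀ (x (k + 1)) = dist (x 0) (x (k + 1)) := by rw [hx0]
              _ ≤ ∑ j ∈ Finset.range (k + 1), dist (x j) (x (j + 1)) :=
                  dist_le_range_sum_dist x (k + 1)
              _ ≤ K := hsum
        have hex := key (x i) hdist
        have heq : x (i + 1) = hex.choose := by rw [hxs i, dif_pos hex]
        rw [heq]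
        exact hex.choose_spec
  have hQ : ∀ n, x (n + 1) ∈ S (x n) ∧
      ∀ z ∈ S (x n), min (dist (x n) z) K ≤ 2 * dist (x n) (x (n + 1)) :=
    fun n => H (n + 1) n (Nat.lt_succ_self n)
  have hsum : ∀ n, ∑ i ∈ Finset.range n, dist (x i) (x (i + 1)) ≤ K := by
    intro n
    cases n with
    | zero => simpa [hx0] using hK.le
    | succ m => exact ha m x rfl (fun i _ => (hQ i).1)
  have hsummable : Summable (fun n => dist (x n) (x (n + 1))) :=
    summable_of_sum_range_le (fun n => dist_nonneg) hsum
  have hcauchy : CauchySeq x := cauchySeq_of_summable_dist hsummable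
  obtain ⟨xb, hxb⟩ := cauchySeq_tendsto_of_complete hcauchy
  have hdxb : dist x₀ xb ≤ K := by
    have htd : Tendsto (fun n => dist x₀ (x n)) atTop (𝓝 (dist x₀ xb)) :=
      (tendsto_const_nhds : Tendsto (fun _ : ℕ => x₀) atTop (𝓝 x₀)).dist hxb
    refine le_of_tendsto htd (Filter.Eventually.of_forall fun n => ?_)
    calc dist x₀ (x n) = dist (x 0) (x n) := by rw [hx0]
      _ ≤ ∑ i ∈ Finset.range n, dist (x i) (x (i + 1)) := dist_le_range_sum_dist x n
      _ ≤ K := hsum n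
  have hSempty : S xb = ∅ := by
    by_contra hne
    obtain ⟨y, hy⟩ := Set.nonempty_iff_ne_empty.2 hne
    have hinf := h2 xb y hy x hxb
    have hfreq : ∃ᶠ n in atTop, y ∈ S (x n) :=
      Nat.frequently_atTop_iff_infinite.2 hinf
    have hyne : 0 < dist xb y := by
      refine dist_pos.2 ?_
      rintro rfl; exact h1 xb hy
    set ε := min (dist xb y) K with hε
    have hεpos : 0 < ε := lt_min hyne hK
    have hεy : ε ≤ dist xb y := min_le_left _ _
    have hεK : ε ≤ K := min_le_right _ _
    have hstep0 : Tendsto (fun n => dist (x n) (x (n + 1))) atTop (𝓝 0) :=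
      hsummable.tendsto_atTop_zero
    have hdist_y : Tendsto (fun n => dist (x n) y) atTop (𝓝 (dist xb y)) :=
      hxb.dist (tendsto_const_nhds : Tendsto (fun _ : ℕ => y) atTop (𝓝 y))
    have hev1 : ∀ᶠ n in atTop, dist (x n) (x (n + 1)) < ε / 4 :=
      hstep0.eventually (gt_mem_nhds (by linarith))
    have hev2 : ∀ᶠ n in atTop, ε / 2 < dist (x n) y :=
      hdist_y.eventually (lt_mem_nhds (by linarith))
    obtain ⟨n, hyn, hn1, hn2⟩ := (hfreq.and_eventually (hev1.and hev2)).exists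
    have hle := (hQ n).2 y hyn
    have hmin : ε / 2 < min (dist (x n) y) K := lt_min hn2 (by linarith)
    linarith
  exact absurd (hb xb hdxb) (by rw [hSempty]; exact Set.not_nonempty_empty)
end

section
/- Let (X, ‖·‖) be a Banach space and Y a Fréchet space with seminorms ‖·‖ₙ. Let g : X → Y be continuous, directionally differentiable, with g(0) = 0. Suppose for some ȳ ∈ Y there exist σ > 0 and an open set U ⊇ σB_X such that for every x ∈ U there exists h ∈ X with ‖h‖ ≤ σ and g'(x, h) = ȳ. Then ȳ belongs to the closure of g(σB_X). -/
open Filter Topology Set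

noncomputable section

/-- Directional derivative: `f'(x,h) = lim_{t↓0} (f(x+th) - f(x))/t`. -/
def HasDirDeriv {X Y : Type*} [AddCommGroup X] [Module ℝ X]
    [AddCommGroup Y] [Module ℝ Y] [TopologicalSpace Y]
    (f : X → Y) (x h : X) (v : Y) : Prop :=
  Filter.Tendsto (fun t : ℝ => t⁻¹ • (f (x + t • h) - f x)) (𝓝[>] (0:ℝ)) (𝓝 v)

/-!
Fix a seminorm `Q` on `Y` and `ε > 0`. Say that `(t', x')` is reachable from `(t, x)` if
`t ≤ t'`, `‖x' - x‖ ≤ (t' - t) σ` and `Q (g x' - g x - (t' - t) • ȳ) ≤ ε (t' - t)`.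
Reachability is a preorder whose upper sets are closed, so an increasing sequence of states
with bounded times converges (`X` is complete) to a common upper bound; the Brezis–Browder
ordering principle then gives a state `(t, x)` with `t ≤ 1`, reachable from `(0, 0)`, whose time
cannot be increased.
Since every `x` of norm at most `σ` admits a direction `h`, `‖h‖ ≤ σ`, with `g'(x, h) = ȳ`, a
state with `t < 1` can always move forward; hence `t = 1`, that is `‖x‖ ≤ σ` and
`Q (g x - ȳ) ≤ ε`. The Fréchet metric is controlled, up to `2⁻ᴺ`, by the finitely many seminorms
`q₀, …, q_{N-1}`, so it suffices to run this argument for `Q = q₀ ⊔ ⋯ ⊔ q_{N-1}`.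
-/

/-- Brezis–Browder ordering principle. -/
theorem exists_ge_forall_ge_imp_le {α : Type*} [Preorder α] {φ : α → ℝ} (hφ : Monotone φ)
    (hφ_bdd : BddAbove (range φ)) (hseq : ∀ u : ℕ → α, Monotone u → BddAbove (range u))
    (a : α) : ∃ b, a ≤ b ∧ ∀ c, b ≤ c → φ c ≤ φ b := by
  set R : α → ℝ := fun p => sSup (φ '' Ici p)
  have le_R : ∀ p c, p ≤ c → φ c ≤ R p := fun p c h =>
    le_csSup (hφ_bdd.mono (image_subset_range _ _)) ⟨c, h, rfl⟩
  have almost_R : ∀ (k : ℕ) (p : α), ∃ p', p ≤ p' ∧ R p - 1 / (k + 1) < φ p' := by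
    intro k p
    obtain ⟨_, ⟨p', hp', rfl⟩, hlt⟩ :=
      exists_lt_of_lt_csSup (nonempty_Ici.image φ) (sub_lt_self (R p) Nat.one_div_pos_of_nat)
    exact ⟨p', hp', hlt⟩
  choose next le_next lt_next using almost_R
  let u : ℕ → α := fun k => Nat.rec a next k
  obtain ⟨b, hb⟩ := hseq u (monotone_nat_of_le_succ fun k => le_next k (u k))
  refine ⟨b, hb ⟨0, rfl⟩, fun c hbc => le_of_forall_pos_lt_add fun η hη => ?_⟩
  obtain ⟨k, hk⟩ := exists_nat_one_div_lt hη
  calc φ c ≤ R (u k) := le_R _ _ ((hb ⟨k, rfl⟩).trans hbc)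
    _ < φ (u (k + 1)) + 1 / (k + 1) := by linarith [lt_next k (u k)]
    _ < φ b + η := add_lt_add_of_le_of_lt (hφ (hb ⟨k + 1, rfl⟩)) hk

section Reachability

variable {X E : Type*} [NormedAddCommGroup X] [SeminormedAddCommGroup E] [NormedSpace ℝ E]

def ApproxReach (g : X → E) (v : E) (σ ε : ℝ) (p q : ℝ × X) : Prop :=
  p.1 ≤ q.1 ∧ ‖q.2 - p.2‖ ≤ (q.1 - p.1) * σ ∧ ‖g q.2 - g p.2 - (q.1 - p.1) • v‖ ≤ ε * (q.1 - p.1)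

variable {g : X → E} {v : E} {σ ε : ℝ}

namespace ApproxReach

theorem refl (p : ℝ × X) : ApproxReach g v σ ε p p := ⟨le_rfl, by simp, by simp⟩

theorem trans {p q r : ℝ × X} (hpq : ApproxReach g v σ ε p q) (hqr : ApproxReach g v σ ε q r) :
    ApproxReach g v σ ε p r := by
  obtain ⟨hpq₁, hpq₂, hpq₃⟩ := hpq
  obtain ⟨hqr₁, hqr₂, hqr₃⟩ := hqr
  have hsplit : g r.2 - g p.2 - (r.1 - p.1) • v =
      (g r.2 - g q.2 - (r.1 - q.1) • v) + (g q.2 - g p.2 - (q.1 - p.1) • v) := by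
    rw [show r.1 - p.1 = (r.1 - q.1) + (q.1 - p.1) by ring, add_smul]
    abel
  refine ⟨hpq₁.trans hqr₁, ?_, ?_⟩
  · linarith [norm_sub_le_norm_sub_add_norm_sub r.2 q.2 p.2]
  · rw [hsplit]
    linarith [norm_add_le (g r.2 - g q.2 - (r.1 - q.1) • v) (g q.2 - g p.2 - (q.1 - p.1) • v)]

end ApproxReach

theorem isClosed_setOf_approxReach (hg : Continuous g) (p : ℝ × X) :
    IsClosed {q | ApproxReach g v σ ε p q} :=
  (isClosed_le continuous_const continuous_fst).inter <|
    (isClosed_le (f := fun q : ℝ × X => ‖q.2 - p.2‖) (by fun_prop) (by fun_prop)).inter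
      (isClosed_le (f := fun q : ℝ × X => ‖g q.2 - g p.2 - (q.1 - p.1) • v‖)
        (by fun_prop) (by fun_prop))

theorem HasDirDeriv.exists_approxReach [NormedSpace ℝ X] {x h : X} (hd : HasDirDeriv g x h v)
    (hh : ‖h‖ ≤ σ) (hε : 0 < ε) (t : ℝ) {θ : ℝ} (hθ : 0 < θ) :
    ∃ δ ∈ Ioc 0 θ, ApproxReach g v σ ε (t, x) (t + δ, x + δ • h) := by
  have hclose : ∀ᶠ δ in 𝓝[>] (0 : ℝ), dist (δ⁻¹ • (g (x + δ • h) - g x)) v < ε :=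
    hd (Metric.ball_mem_nhds v hε)
  obtain ⟨δ, hclose, hδ0, hδθ⟩ := (hclose.and (Ioc_mem_nhdsGT hθ)).exists
  have hquot : g (x + δ • h) - g x - δ • v = δ • (δ⁻¹ • (g (x + δ • h) - g x) - v) := by
    rw [smul_sub, smul_inv_smul₀ hδ0.ne']
  refine ⟨δ, ⟨hδ0, hδθ⟩, by simpa using hδ0.le, ?_, ?_⟩
  · simpa [norm_smul, abs_of_pos hδ0] using mul_le_mul_of_nonneg_left hh hδ0.le
  · simp only [add_sub_cancel_left]
    rw [hquot, norm_smul, Real.norm_of_nonneg hδ0.le, mul_comm ε]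
    exact mul_le_mul_of_nonneg_left (le_of_lt (by simpa [dist_eq_norm] using hclose)) hδ0.le

theorem exists_tendsto_approxReach [CompleteSpace X] (hg : Continuous g) (hσ : 0 ≤ σ)
    {u : ℕ → ℝ × X} (hu : ∀ m n, m ≤ n → ApproxReach g v σ ε (u m) (u n))
    (hbdd : BddAbove (range fun n => (u n).1)) :
    ∃ b, Tendsto u atTop (𝓝 b) ∧ ∀ n, ApproxReach g v σ ε (u n) b := by
  obtain ⟨T, hT⟩ : ∃ T, Tendsto (fun n => (u n).1) atTop (𝓝 T) :=
    ⟨_, tendsto_atTop_ciSup (fun m n h => (hu m n h).1) hbdd⟩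
  have hx : CauchySeq fun n => (u n).2 := by
    refine Metric.cauchySeq_iff'.2 fun η hη => ?_
    obtain ⟨K, hK⟩ := Metric.cauchySeq_iff'.1 hT.cauchySeq (η / (σ + 1)) (by positivity)
    refine ⟨K, fun n hn => ?_⟩
    have htime : (u n).1 - (u K).1 < η / (σ + 1) :=
      (le_abs_self _).trans_lt (Real.dist_eq _ _ ▸ hK n hn)
    have hfrac : η / (σ + 1) * σ < η := by
      rw [div_mul_eq_mul_div, div_lt_iff₀ (by linarith)]
      nlinarith
    rw [dist_eq_norm]
    calc ‖(u n).2 - (u K).2‖ ≤ ((u n).1 - (u K).1) * σ := (hu K n hn).2.1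
      _ ≤ η / (σ + 1) * σ := by gcongr
      _ < η := hfrac
  obtain ⟨xs, hxs⟩ := cauchySeq_tendsto_of_complete hx
  have hlim : Tendsto u atTop (𝓝 (T, xs)) := hT.prodMk_nhds hxs
  exact ⟨(T, xs), hlim, fun n => (isClosed_setOf_approxReach hg (u n)).mem_of_tendsto hlim
    (eventually_atTop.2 ⟨n, hu n⟩)⟩

theorem exists_norm_sub_le_of_hasDirDeriv [NormedSpace ℝ X] [CompleteSpace X] (hg : Continuous g)
    (hg0 : g 0 = 0) (hσ : 0 ≤ σ)
    (hsurj : ∀ x ∈ Metric.closedBall (0 : X) σ, ∃ h, ‖h‖ ≤ σ ∧ HasDirDeriv g x h v)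
    (hε : 0 < ε) : ∃ x ∈ Metric.closedBall (0 : X) σ, ‖g x - v‖ ≤ ε := by
  let _ : Preorder {p : ℝ × X // p.1 ≤ 1} :=
    { le := fun p q => ApproxReach g v σ ε p q
      le_refl := fun p => ApproxReach.refl p.1
      le_trans := fun _ _ _ => ApproxReach.trans }
  have hchain : ∀ u : ℕ → {p : ℝ × X // p.1 ≤ 1}, Monotone u → BddAbove (range u) := by
    intro u hu
    obtain ⟨b, hub, hb⟩ := exists_tendsto_approxReach hg hσ (u := fun n => (u n).1)
      (fun m n h => hu h) ⟨1, forall_mem_range.2 fun n => (u n).2⟩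
    exact ⟨⟨b, le_of_tendsto' ((continuous_fst.tendsto _).comp hub) fun n => (u n).2⟩,
      forall_mem_range.2 hb⟩
  obtain ⟨b, hb, hmax⟩ := exists_ge_forall_ge_imp_le
    (φ := fun p : {p : ℝ × X // p.1 ≤ 1} => p.1.1) (fun _ _ h => And.left h)
    ⟨1, forall_mem_range.2 fun p => p.2⟩ hchain ⟨(0, 0), zero_le_one⟩
  have hbx : b.1.2 ∈ Metric.closedBall (0 : X) σ := by
    have hnorm : ‖b.1.2‖ ≤ b.1.1 * σ := by simpa using hb.2.1
    rw [mem_closedBall_zero_iff]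
    nlinarith [b.2]
  have hb1 : b.1.1 = 1 := by
    by_contra hne
    obtain ⟨h, hh, hd⟩ := hsurj _ hbx
    obtain ⟨δ, ⟨hδ0, hδ⟩, hreach⟩ :=
      hd.exists_approxReach hh hε b.1.1 (sub_pos.2 (lt_of_le_of_ne b.2 hne))
    have hle : b.1.1 + δ ≤ b.1.1 := hmax ⟨_, by linarith⟩ hreach
    linarith
  refine ⟨b.1.2, hbx, ?_⟩
  simpa [hb1, hg0] using hb.2.2

theorem mem_closure_image_closedBall_of_hasDirDeriv [NormedSpace ℝ X] [CompleteSpace X]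
    (hg : Continuous g) (hg0 : g 0 = 0) (hσ : 0 ≤ σ)
    (hsurj : ∀ x ∈ Metric.closedBall (0 : X) σ, ∃ h, ‖h‖ ≤ σ ∧ HasDirDeriv g x h v) :
    v ∈ closure (g '' Metric.closedBall (0 : X) σ) := by
  refine Metric.mem_closure_iff.2 fun ε hε => ?_
  obtain ⟨x, hx, hgx⟩ :=
    exists_norm_sub_le_of_hasDirDeriv (ε := ε / 2) hg hg0 hσ hsurj (by positivity)
  exact ⟨g x, mem_image_of_mem g hx, by rw [dist_comm, dist_eq_norm]; linarith⟩

end Reachability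

theorem HasDirDeriv.continuousLinearMap_comp {X Y Z : Type*} [AddCommGroup X] [Module ℝ X]
    [AddCommGroup Y] [Module ℝ Y] [TopologicalSpace Y] [AddCommGroup Z] [Module ℝ Z]
    [TopologicalSpace Z] {f : X → Y} {x h : X} {v : Y} (L : Y →L[ℝ] Z)
    (hf : HasDirDeriv f x h v) : HasDirDeriv (L ∘ f) x h (L v) := by
  simpa [HasDirDeriv, Function.comp_def] using (L.continuous.tendsto v).comp hf

/-- `Y` with the topology of the single seminorm `Q`: a type synonym, because `Y` keeps its own
topology. -/
def WithSeminorm {Y : Type*} [AddCommGroup Y] [Module ℝ Y] (_Q : Seminorm ℝ Y) : Type _ := Y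

namespace WithSeminorm

variable {Y : Type*} [AddCommGroup Y] [Module ℝ Y] (Q : Seminorm ℝ Y)

instance : SeminormedAddCommGroup (WithSeminorm Q) := Q.toSeminormedAddCommGroup

instance : Module ℝ (WithSeminorm Q) := inferInstanceAs (Module ℝ Y)

instance : NormedSpace ℝ (WithSeminorm Q) where
  norm_smul_le a y := (map_smul_eq_mul Q a y).le

def of : Y →ₗ[ℝ] WithSeminorm Q := LinearMap.id

theorem dist_of (a b : Y) : dist (of Q a) (of Q b) = Q (a - b) := dist_eq_norm _ _

end WithSeminorm

section FrechetMetric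

variable {Y : Type*} [AddCommGroup Y] [Module ℝ Y] {q : ℕ → Seminorm ℝ Y}

theorem frechet_term_le_pow (n : ℕ) (y : Y) :
    (2:ℝ)⁻¹ ^ n * q n y / (1 + q n y) ≤ (2:ℝ)⁻¹ ^ n := by
  have hq := apply_nonneg (q n) y
  rw [mul_div_assoc]
  exact mul_le_of_le_one_right (by positivity) ((div_le_one (by linarith)).2 (by linarith))

theorem frechet_term_le_seminorm (n : ℕ) (y : Y) :
    (2:ℝ)⁻¹ ^ n * q n y / (1 + q n y) ≤ q n y := by
  have hq := apply_nonneg (q n) y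
  rw [mul_div_assoc]
  exact (mul_le_of_le_one_left (by positivity) (pow_le_one₀ (by norm_num) (by norm_num))).trans
    (div_le_self hq (by linarith))

def IsFrechetMetric [Dist Y] (q : ℕ → Seminorm ℝ Y) : Prop :=
  ∀ u v : Y, dist u v = ⨆ n : ℕ, (2:ℝ)⁻¹ ^ n * q n (u - v) / (1 + q n (u - v))

variable [PseudoMetricSpace Y]

theorem IsFrechetMetric.term_le_dist (hdistY : IsFrechetMetric q) (n : ℕ) (u v : Y) :
    (2:ℝ)⁻¹ ^ n * q n (u - v) / (1 + q n (u - v)) ≤ dist u v :=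
  hdistY u v ▸ le_ciSup ⟨1, forall_mem_range.2 fun m =>
    (frechet_term_le_pow m _).trans (pow_le_one₀ (by norm_num) (by norm_num))⟩ n

theorem IsFrechetMetric.dist_le_max_finset_sup (hdistY : IsFrechetMetric q) (N : ℕ) (u v : Y) :
    dist u v ≤ max ((2:ℝ)⁻¹ ^ N) ((Finset.range N).sup q (u - v)) := by
  rw [hdistY]
  refine ciSup_le fun n => ?_
  rcases lt_or_ge n N with hn | hn
  · exact le_max_of_le_right ((frechet_term_le_seminorm n _).trans
      (Seminorm.le_finset_sup_apply (Finset.mem_range.2 hn)))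
  · exact le_max_of_le_left ((frechet_term_le_pow n _).trans
      (pow_le_pow_of_le_one (by norm_num) (by norm_num) hn))

theorem IsFrechetMetric.continuous_withSeminorm_of_finset_sup (hdistY : IsFrechetMetric q)
    (N : ℕ) :
    Continuous (WithSeminorm.of ((Finset.range N).sup q)) := by
  refine Metric.continuous_iff.2 fun b ε hε => ⟨(2:ℝ)⁻¹ ^ N * (ε / (1 + ε)), by positivity,
    fun a hab => ?_⟩
  rw [WithSeminorm.dist_of]
  refine Seminorm.finset_sup_apply_lt hε fun n hn => ?_
  have hq := apply_nonneg (q n) (a - b)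
  have hpow : (2:ℝ)⁻¹ ^ N ≤ (2:ℝ)⁻¹ ^ n :=
    pow_le_pow_of_le_one (by norm_num) (by norm_num) (Finset.mem_range.1 hn).le
  have hterm :
      (2:ℝ)⁻¹ ^ n * (q n (a - b) / (1 + q n (a - b))) < (2:ℝ)⁻¹ ^ n * (ε / (1 + ε)) := by
    rw [← mul_div_assoc]
    calc _ ≤ dist a b := hdistY.term_le_dist n a b
      _ < _ := hab
      _ ≤ _ := by gcongr
  have hfrac := lt_of_mul_lt_mul_left hterm (by positivity)
  rw [div_lt_div_iff₀ (by linarith) (by linarith)] at hfrac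
  nlinarith

end FrechetMetric

theorem stmt7_general {X Y : Type*} [NormedAddCommGroup X] [NormedSpace ℝ X] [CompleteSpace X]
    [AddCommGroup Y] [Module ℝ Y] [MetricSpace Y]
    (q : ℕ → Seminorm ℝ Y)
    (hdistY : ∀ u v : Y,
      dist u v = ⨆ n : ℕ, (2:ℝ)⁻¹ ^ n * q n (u - v) / (1 + q n (u - v)))
    (g : X → Y) (hg : Continuous g)
    (hg0 : g 0 = 0)
    (ybar : Y) (σ : ℝ) (hσ : 0 < σ) (U : Set X)
    (hUB : Metric.closedBall (0:X) σ ⊆ U)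
    (hsurj : ∀ x ∈ U, ∃ h : X, ‖h‖ ≤ σ ∧ HasDirDeriv g x h ybar) :
    ybar ∈ closure (g '' Metric.closedBall (0:X) σ) := by
  have hq : IsFrechetMetric q := hdistY
  refine Metric.mem_closure_iff.2 fun ε hε => ?_
  obtain ⟨N, hN⟩ := exists_pow_lt_of_lt_one hε (by norm_num : (2:ℝ)⁻¹ < 1)
  let L : Y →L[ℝ] WithSeminorm ((Finset.range N).sup q) :=
    ⟨WithSeminorm.of _, hq.continuous_withSeminorm_of_finset_sup N⟩
  have hL : L ybar ∈ closure ((L ∘ g) '' Metric.closedBall 0 σ) :=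
    mem_closure_image_closedBall_of_hasDirDeriv (L.continuous.comp hg) (by simp [hg0]) hσ.le
      fun x hx => (hsurj x (hUB hx)).imp fun _ ⟨hh, hd⟩ => ⟨hh, hd.continuousLinearMap_comp L⟩
  obtain ⟨_, ⟨x, hx, rfl⟩, hLx⟩ := Metric.mem_closure_iff.1 hL ε hε
  exact ⟨g x, mem_image_of_mem g hx,
    (hq.dist_le_max_finset_sup N _ _).trans_lt
      (max_lt hN (by simpa [L, WithSeminorm.dist_of] using hLx))⟩

theorem stmt7 {X Y : Type*} [NormedAddCommGroup X] [NormedSpace ℝ X] [CompleteSpace X]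
    [AddCommGroup Y] [Module ℝ Y] [MetricSpace Y] [CompleteSpace Y]
    (q : ℕ → Seminorm ℝ Y)
    (hdistY : ∀ u v : Y,
      dist u v = ⨆ n : ℕ, (2:ℝ)⁻¹ ^ n * q n (u - v) / (1 + q n (u - v)))
    (g : X → Y) (hg : Continuous g)
    (hdiff : ∀ x h : X, ∃ v : Y, HasDirDeriv g x h v)
    (hg0 : g 0 = 0)
    (ybar : Y) (σ : ℝ) (hσ : 0 < σ) (U : Set X) (hU : IsOpen U)
    (hUB : Metric.closedBall (0:X) σ ⊆ U)
    (hsurj : ∀ x ∈ U, ∃ h : X, ‖h‖ ≤ σ ∧ HasDirDeriv g x h ybar) :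
    ybar ∈ closure (g '' Metric.closedBall (0:X) σ) :=
  stmt7_general q hdistY g hg hg0 ybar σ hσ U hUB hsurj
end
end

section
/- Let X, Y be Fréchet spaces, U ⊆ X nonempty open, and f : X → Y continuous such that for every s ∈ ℝ₊^∞ and every x with x + Π_s(X) ⊆ U one has cl f(x + Π_s(X)) ⊇ f(x) + Π_s(Y). Then f(B(x,r)) ⊇ B°(f(x), r) for all x ∈ U and all r with 0 < r < dist(x, X∖U), where balls are with respect to the standard Fréchet metrics on X and Y. -/
open Filter Topology Set

private lemma frac_mono18 (n : ℕ) {s t : ℝ} (hs : 0 ≤ s) (hst : s ≤ t) :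
    (2:ℝ)⁻¹ ^ n * s / (1 + s) ≤ (2:ℝ)⁻¹ ^ n * t / (1 + t) := by
  have h1 : (0:ℝ) < 1 + s := by linarith
  have h2 : (0:ℝ) < 1 + t := by linarith
  rw [div_le_div_iff₀ h1 h2]
  have hp : (0:ℝ) ≤ (2:ℝ)⁻¹ ^ n := by positivity
  nlinarith [mul_le_mul_of_nonneg_left hst hp]

private lemma frac_bdd18 (n : ℕ) {t : ℝ} (ht : 0 ≤ t) :
    (2:ℝ)⁻¹ ^ n * t / (1 + t) ≤ 1 := by
  have h2 : (0:ℝ) < 1 + t := by linarith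
  rw [div_le_one h2]
  have hp : (2:ℝ)⁻¹ ^ n ≤ 1 := pow_le_one₀ (by norm_num) (by norm_num)
  nlinarith

theorem stmt18 {X Y : Type*}
    [AddCommGroup X] [Module ℝ X] [MetricSpace X] [CompleteSpace X]
    [AddCommGroup Y] [Module ℝ Y] [MetricSpace Y] [CompleteSpace Y]
    (p : ℕ → Seminorm ℝ X) (q : ℕ → Seminorm ℝ Y)
    (hdistX : ∀ x y : X,
      dist x y = ⨆ n : ℕ, (2:ℝ)⁻¹ ^ n * p n (x - y) / (1 + p n (x - y)))
    (hdistY : ∀ u v : Y,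
      dist u v = ⨆ n : ℕ, (2:ℝ)⁻¹ ^ n * q n (u - v) / (1 + q n (u - v)))
    (U : Set X) (hUne : U.Nonempty) (hU : IsOpen U)
    (f : X → Y) (hf : Continuous f)
    (hsurj : ∀ s : ℕ → ℝ, (∀ n, 0 ≤ s n) → ∀ x : X,
      (∀ h : X, (∀ n, p n h ≤ s n) → x + h ∈ U) →
      ∀ v : Y, (∀ n, q n v ≤ s n) →
        f x + v ∈ closure (f '' ((fun h => x + h) '' {h : X | ∀ n, p n h ≤ s n}))) :
    ∀ x ∈ U, ∀ r : ℝ, 0 < r → r < Metric.infDist x Uᶜ →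
      Metric.ball (f x) r ⊆ f '' Metric.closedBall x r := by
  -- key comparison lemma: seminorm domination implies distance domination
  have lemA : ∀ (h : X) (v : Y) (a : X) (u : Y), (∀ n, p n h ≤ q n v) →
      dist a (a + h) ≤ dist u (u + v) := by
    intro h v a u hle
    rw [hdistX, hdistY]
    have e1 : a - (a + h) = -h := by abel
    have e2 : u - (u + v) = -v := by abel
    rw [e1, e2]
    have hB : BddAbove (Set.range fun n : ℕ =>
        (2:ℝ)⁻¹ ^ n * q n (-v) / (1 + q n (-v))) := by
      refine ⟨1, ?_⟩
      rintro _ ⟨n, rfl⟩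
      exact frac_bdd18 n (apply_nonneg _ _)
    refine ciSup_mono hB fun n => ?_
    have h1 : p n (-h) ≤ q n (-v) := by
      rw [map_neg_eq_map, map_neg_eq_map]; exact hle n
    exact frac_mono18 n (apply_nonneg _ _) h1
  intro x hx r hr hrD y hy
  have hy' : dist (f x) y < r := by rw [dist_comm]; exact Metric.mem_ball.mp hy
  set c : ℝ := r - dist (f x) y with hc
  have hcpos : 0 < c := by simp only [hc]; linarith
  have hcr : c ≤ r := by
    have := dist_nonneg (x := f x) (y := y); simp only [hc]; linarith
  -- step lemma
  have step : ∀ a : X, dist (f a) y < Metric.infDist a Uᶜ → ∀ ε : ℝ, 0 < ε →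
      ∃ b : X, dist a b ≤ dist (f a) y ∧ dist (f b) y < ε := by
    intro a ha ε hε
    set v : Y := y - f a with hv
    have hfav : f a + v = y := by simp [hv]
    have hdav : ∀ u : Y, dist u (u + v) = dist (f a) y := by
      intro u
      rw [hdistY, hdistY]
      have e1 : u - (u + v) = -v := by abel
      have e2 : f a - y = -v := by rw [hv]; abel
      rw [e1, e2]
    have hmem : ∀ h : X, (∀ n, p n h ≤ q n v) → a + h ∈ U := by
      intro h hh
      by_contra hcon
      have h1 : Metric.infDist a Uᶜ ≤ dist a (a + h) :=
        Metric.infDist_le_dist_of_mem hcon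
      have h2 : dist a (a + h) ≤ dist (f a) (f a + v) := lemA h v a (f a) hh
      rw [hdav (f a)] at h2
      linarith
    have hcl := hsurj (fun n => q n v) (fun n => apply_nonneg _ _) a hmem v
      (fun n => le_refl _)
    rw [hfav] at hcl
    rcases Metric.mem_closure_iff.mp hcl ε hε with ⟨z, hz, hdz⟩
    rcases hz with ⟨w, ⟨h, hh, rfl⟩, rfl⟩
    refine ⟨a + h, ?_, ?_⟩
    · have h2 : dist a (a + h) ≤ dist (f a) (f a + v) := lemA h v a (f a) hh
      rw [hdav (f a)] at h2; exact h2
    · rw [dist_comm]; exact hdz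
  -- the invariant
  set P : ℕ → X → Prop := fun k a =>
    dist x a + dist (f a) y ≤ r - c * (2:ℝ)⁻¹ ^ k ∧ dist (f a) y ≤ r * (2:ℝ)⁻¹ ^ k
    with hP
  have key : ∀ k : ℕ, ∀ a : X, P k a →
      ∃ b : X, P (k + 1) b ∧ dist a b ≤ r * (2:ℝ)⁻¹ ^ k := by
    intro k a hPa
    obtain ⟨hPa1, hPa2⟩ := hPa
    have hpk : (0:ℝ) < (2:ℝ)⁻¹ ^ k := by positivity
    have hDa : dist (f a) y < Metric.infDist a Uᶜ := by
      have h1 : Metric.infDist x Uᶜ ≤ Metric.infDist a Uᶜ + dist x a :=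
        Metric.infDist_le_infDist_add_dist
      nlinarith
    obtain ⟨b, hab, hby⟩ := step a hDa (c * (2:ℝ)⁻¹ ^ (k + 1))
      (by positivity)
    have hps : (2:ℝ)⁻¹ ^ (k + 1) = (2:ℝ)⁻¹ ^ k * 2⁻¹ := pow_succ _ _
    refine ⟨b, ⟨?_, ?_⟩, le_trans hab hPa2⟩
    · have htr : dist x b ≤ dist x a + dist a b := dist_triangle _ _ _
      rw [hps] at hby ⊢
      have harr : c * ((2:ℝ)⁻¹ ^ k * 2⁻¹) * 2 = c * (2:ℝ)⁻¹ ^ k := by ring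
      linarith [hby.le, hPa1, htr, hab]
    · have : c * (2:ℝ)⁻¹ ^ (k + 1) ≤ r * (2:ℝ)⁻¹ ^ (k + 1) := by
        have : (0:ℝ) ≤ (2:ℝ)⁻¹ ^ (k + 1) := by positivity
        nlinarith
      linarith [hby.le]
  choose! F hF using key
  set g : ℕ → X := fun k => Nat.rec x F k with hg
  have hg0 : g 0 = x := rfl
  have hgs : ∀ k, g (k + 1) = F k (g k) := fun k => rfl
  have hgP : ∀ k, P k (g k) := by
    intro k
    induction k with
    | zero =>
      refine ⟨?_, ?_⟩
      · simp only [hg0, dist_self, zero_add, pow_zero, mul_one]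
        linarith [hc]
      · simp only [hg0, pow_zero, mul_one]
        linarith
    | succ k ih =>
      rw [hgs]; exact (hF k (g k) ih).1
  have hgd : ∀ k, dist (g k) (g (k + 1)) ≤ r * (2:ℝ)⁻¹ ^ k := by
    intro k; rw [hgs]; exact (hF k (g k) (hgP k)).2
  have hcauchy : CauchySeq g := cauchySeq_of_le_geometric 2⁻¹ r (by norm_num) hgd
  obtain ⟨a, ha⟩ := cauchySeq_tendsto_of_complete hcauchy
  have hlim0 : Tendsto (fun k : ℕ => r * (2:ℝ)⁻¹ ^ k) atTop (𝓝 0) := by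
    have := tendsto_pow_atTop_nhds_zero_of_lt_one
      (by norm_num : (0:ℝ) ≤ 2⁻¹) (by norm_num : (2:ℝ)⁻¹ < 1)
    simpa using this.const_mul r
  have hfgy : Tendsto (fun k => f (g k)) atTop (𝓝 y) := by
    rw [tendsto_iff_dist_tendsto_zero]
    exact squeeze_zero (fun k => dist_nonneg) (fun k => (hgP k).2) hlim0
  have hfga : Tendsto (fun k => f (g k)) atTop (𝓝 (f a)) :=
    (hf.tendsto a).comp ha
  have hfay : f a = y := tendsto_nhds_unique hfga hfgy
  have hxa : dist x a ≤ r := by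
    have hten : Tendsto (fun k => dist x (g k)) atTop (𝓝 (dist x a)) :=
      tendsto_const_nhds.dist ha
    refine le_of_tendsto hten (Filter.Eventually.of_forall fun k => ?_)
    have h1 := (hgP k).1
    have h2 : (0:ℝ) ≤ c * (2:ℝ)⁻¹ ^ k := by positivity
    have h3 := dist_nonneg (x := f (g k)) (y := y)
    linarith
  exact ⟨a, Metric.mem_closedBall.mpr (by rw [dist_comm]; exact hxa), hfay⟩
end
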